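/- Let φ : ℝ → ℝ be twice continuously differentiable with sup_x φ''(x) − inf_x φ''(x) ≤ B, and let β > 0, μ0 ∈ ℝ, δr ∈ ℝ satisfy β + φ''(μ0) − B > 0. Then the hybrid distribution h is a well-defined probability measure with finite variance, and its variance satisfies v_h ≤ (β + φ''(μ0) − B)⁻¹. -/

import Mathlib

/-!
The hybrid density is `exp (-V)` with `V x = φ x + β/2 x² - (β μ0 - δr) x`, and
`V'' = φ'' + β ≥ k := β + φ''(μ0) - B > 0`. So `V` is `k`-strongly convex: `exp (-V)` has
Gaussian tails, and `k (x - m)² ≤ (x - m) (V' x - V' m)`. Since `V'` is Lipschitz, integration by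
parts applies and gives Stein's identity `E[(X - m) V'(X)] = 1`; when `m` is the mean,
`E[(X - m) V'(m)] = 0`, so integrating the strong-monotonicity inequality yields `k Var X ≤ 1`.
-/

open MeasureTheory Real Filter
open scoped NNReal

noncomputable section

/-- Unnormalized density of the hybrid distribution:
`l(x) · exp(−(β/2)x² + (β μ0 − δr)x)` with `l = exp (−φ)`. -/
def hybridDens (φ : ℝ → ℝ) (β μ0 δr : ℝ) (x : ℝ) : ℝ :=
  Real.exp (-(φ x) - β / 2 * x ^ 2 + (β * μ0 - δr) * x)

/-- The hybrid distribution: the normalized measure with density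
proportional to `hybridDens`. -/
def hybrid (φ : ℝ → ℝ) (β μ0 δr : ℝ) : Measure ℝ :=
  ((volume.withDensity fun x => ENNReal.ofReal (hybridDens φ β μ0 δr x)) Set.univ)⁻¹ •
    (volume.withDensity fun x => ENNReal.ofReal (hybridDens φ β μ0 δr x))

/-- Mean of the hybrid distribution. -/
def hybridMean (φ : ℝ → ℝ) (β μ0 δr : ℝ) : ℝ :=
  ∫ x, x ∂(hybrid φ β μ0 δr)

/-- Variance of the hybrid distribution. -/
def hybridVar (φ : ℝ → ℝ) (β μ0 δr : ℝ) : ℝ :=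
  ∫ x, (x - hybridMean φ β μ0 δr) ^ 2 ∂(hybrid φ β μ0 δr)

open Set

lemma monotone_sub_mul_of_le_hasDerivAt {f f' : ℝ → ℝ} {k : ℝ}
    (hf : ∀ x, HasDerivAt f (f' x) x) (hk : ∀ x, k ≤ f' x) : Monotone fun x => f x - k * x := by
  have hg : ∀ x, HasDerivAt (fun x => f x - k * x) (f' x - k) x := fun x =>
    ((hf x).sub ((hasDerivAt_id' x).const_mul k)).congr_deriv (by ring)
  refine monotone_of_deriv_nonneg (fun x => (hg x).differentiableAt) fun x => ?_
  rw [(hg x).deriv]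
  linarith [hk x]

lemma Monotone.mul_sq_sub_le_mul_sub {f : ℝ → ℝ} {k : ℝ}
    (hf : Monotone fun x => f x - k * x) (a x : ℝ) : k * (x - a) ^ 2 ≤ (x - a) * (f x - f a) := by
  rcases le_total a x with h | h
  · nlinarith [hf h]
  · nlinarith [hf h]

lemma ConvexOn.add_mul_sub_le_of_hasDerivAt {f : ℝ → ℝ} {f' a : ℝ}
    (hf : ConvexOn ℝ univ f) (hf' : HasDerivAt f f' a) (x : ℝ) : f a + f' * (x - a) ≤ f x := by
  rcases lt_trichotomy a x with h | rfl | h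
  · have := hf.le_slope_of_hasDerivAt (mem_univ a) (mem_univ x) h hf'
    rw [slope_def_field, le_div_iff₀ (sub_pos.2 h)] at this
    linarith
  · simp
  · have := hf.slope_le_of_hasDerivAt (mem_univ x) (mem_univ a) h hf'
    rw [slope_def_field, div_le_iff₀ (sub_pos.2 h)] at this
    linarith

lemma add_mul_add_sq_le_of_monotone_sub_mul {V V' : ℝ → ℝ} {k : ℝ}
    (hV : ∀ x, HasDerivAt V (V' x) x) (hmono : Monotone fun x => V' x - k * x) (x : ℝ) :
    V 0 + V' 0 * x + k / 2 * x ^ 2 ≤ V x := by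
  have hG : ∀ x, HasDerivAt (fun x => V x - k / 2 * x ^ 2) (V' x - k * x) x := fun x =>
    ((hV x).sub ((hasDerivAt_pow 2 x).const_mul (k / 2))).congr_deriv (by push_cast; ring)
  have hG' : deriv (fun x => V x - k / 2 * x ^ 2) = fun x => V' x - k * x :=
    funext fun x => (hG x).deriv
  have hconv : ConvexOn ℝ univ fun x => V x - k / 2 * x ^ 2 :=
    Monotone.convexOn_univ_of_deriv (fun x => (hG x).differentiableAt) (hG' ▸ hmono)
  have := hconv.add_mul_sub_le_of_hasDerivAt (hG 0) x
  linarith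

lemma one_add_sq_mul_exp_le {k : ℝ} (hk : 0 < k) (b x : ℝ) :
    (1 + x ^ 2) * exp (b * x - k / 2 * x ^ 2)
      ≤ 2 * exp ((1 + |b|) ^ 2 / k) * exp (-(k / 4) * x ^ 2) := by
  have hpoly : 1 + x ^ 2 ≤ 2 * exp |x| := by
    nlinarith [quadratic_le_exp_of_nonneg (abs_nonneg x), sq_abs x, abs_nonneg x]
  have hexp : |x| + (b * x - k / 2 * x ^ 2) ≤ (1 + |b|) ^ 2 / k + -(k / 4) * x ^ 2 := by
    rw [div_add' _ _ _ hk.ne', le_div_iff₀ hk]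
    have hbx : k * (b * x) ≤ k * (|b| * |x|) :=
      mul_le_mul_of_nonneg_left ((le_abs_self _).trans (abs_mul b x).le) hk.le
    rw [← sq_abs x]
    nlinarith [sq_nonneg (k * |x| - 2 * (1 + |b|))]
  calc (1 + x ^ 2) * exp (b * x - k / 2 * x ^ 2)
      ≤ 2 * exp |x| * exp (b * x - k / 2 * x ^ 2) := by gcongr
    _ = 2 * exp (|x| + (b * x - k / 2 * x ^ 2)) := by rw [exp_add]; ring
    _ ≤ 2 * exp ((1 + |b|) ^ 2 / k + -(k / 4) * x ^ 2) := by gcongr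
    _ = 2 * exp ((1 + |b|) ^ 2 / k) * exp (-(k / 4) * x ^ 2) := by rw [exp_add]; ring

lemma abs_add_mul_add_mul_abs_le {p q K : ℝ} (hp : 0 ≤ p) (hq : 0 ≤ q) (hK : 0 ≤ K) (x : ℝ) :
    (|x| + p) * (q + K * |x|) ≤ (1 + p) * (q + K) * (1 + x ^ 2) := by
  have hx : |x| ≤ 1 + x ^ 2 := by nlinarith [sq_abs x, sq_nonneg (|x| - 1)]
  rw [← sq_abs x] at hx ⊢
  nlinarith [mul_le_mul_of_nonneg_left hx (add_nonneg hq (mul_nonneg hp hK)), abs_nonneg x,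
    mul_nonneg hp hq, mul_nonneg hK (sq_nonneg |x|)]

lemma integrable_exp_neg_mul_of_quadratic_le {V f : ℝ → ℝ} {a b k C : ℝ}
    (hV : Continuous V) (hk : 0 < k) (hV_ge : ∀ x, a + b * x + k / 2 * x ^ 2 ≤ V x)
    (hf : Continuous f)
    (hfC : ∀ x, |f x| ≤ C * (1 + x ^ 2)) : Integrable fun x => exp (-V x) * f x := by
  have hC : 0 ≤ C := by simpa using (abs_nonneg _).trans (hfC 0)
  refine Integrable.mono'
    ((integrable_exp_neg_mul_sq (div_pos hk four_pos)).const_mul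
      (C * exp (-a) * (2 * exp ((1 + |-b|) ^ 2 / k))))
    (hV.neg.rexp.mul hf).aestronglyMeasurable (ae_of_all _ fun x => ?_)
  have hexp : exp (-V x) ≤ exp (-a) * exp (-b * x - k / 2 * x ^ 2) := by
    rw [← exp_add]
    exact exp_le_exp.2 (by linarith [hV_ge x])
  calc ‖exp (-V x) * f x‖ = exp (-V x) * |f x| := by
        rw [norm_mul, Real.norm_eq_abs, Real.norm_eq_abs, abs_of_pos (exp_pos _)]
    _ ≤ exp (-a) * exp (-b * x - k / 2 * x ^ 2) * (C * (1 + x ^ 2)) := by gcongr; exact hfC x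
    _ = C * exp (-a) * ((1 + x ^ 2) * exp (-b * x - k / 2 * x ^ 2)) := by ring
    _ ≤ C * exp (-a) * (2 * exp ((1 + |-b|) ^ 2 / k) * exp (-(k / 4) * x ^ 2)) :=
        mul_le_mul_of_nonneg_left (one_add_sq_mul_exp_le hk (-b) x) (by positivity)
    _ = _ := by ring

lemma Measure.tilted_eq_inv_smul_withDensity {α : Type*} [MeasurableSpace α] {μ : Measure α}
    [NeZero μ] {f : α → ℝ} (hf : Integrable (fun x => exp (f x)) μ) :
    μ.tilted f = ((μ.withDensity fun x => ENNReal.ofReal (exp (f x))) Set.univ)⁻¹ •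
      μ.withDensity fun x => ENNReal.ofReal (exp (f x)) := by
  have hZ := integral_exp_pos hf
  rw [withDensity_apply _ MeasurableSet.univ, Measure.restrict_univ,
    ← ofReal_integral_eq_lintegral_ofReal hf (ae_of_all _ fun x => (exp_pos _).le),
    ← withDensity_smul' _ _ (ENNReal.inv_ne_top.2 (ENNReal.ofReal_pos.2 hZ).ne'), Measure.tilted]
  congr with x
  rw [Pi.smul_apply, smul_eq_mul, div_eq_inv_mul, ENNReal.ofReal_mul (inv_nonneg.2 hZ.le),
    ENNReal.ofReal_inv_of_pos hZ]

section StronglyMonotoneDerivative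

variable {V V' : ℝ → ℝ} {k : ℝ}

lemma integrable_exp_neg_mul_of_monotone_sub_mul (hV : ∀ x, HasDerivAt V (V' x) x) (hk : 0 < k)
    (hmono : Monotone fun x => V' x - k * x) {f : ℝ → ℝ} {C : ℝ} (hf : Continuous f)
    (hfC : ∀ x, |f x| ≤ C * (1 + x ^ 2)) : Integrable fun x => exp (-V x) * f x :=
  integrable_exp_neg_mul_of_quadratic_le
    (continuous_iff_continuousAt.2 fun x => (hV x).continuousAt) hk
    (add_mul_add_sq_le_of_monotone_sub_mul hV hmono) hf hfC

lemma integrable_exp_neg_of_monotone_sub_mul (hV : ∀ x, HasDerivAt V (V' x) x) (hk : 0 < k)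
    (hmono : Monotone fun x => V' x - k * x) : Integrable fun x => exp (-V x) := by
  simpa using integrable_exp_neg_mul_of_monotone_sub_mul hV hk hmono continuous_const
    (f := fun _ => 1) (C := 1) fun x => by simp [sq_nonneg]

lemma integral_deriv_tilted_eq_integral_mul_deriv {g g' : ℝ → ℝ}
    (hV : ∀ x, HasDerivAt V (V' x) x) (hg : ∀ x, HasDerivAt g (g' x) x)
    (hI : Integrable fun x => exp (-V x))
    (hg_int : Integrable g (volume.tilted fun x => -V x))
    (hg'_int : Integrable g' (volume.tilted fun x => -V x))
    (hgV'_int : Integrable (fun x => g x * V' x) (volume.tilted fun x => -V x)) :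
    ∫ x, g' x ∂(volume.tilted fun x => -V x) = ∫ x, g x * V' x ∂(volume.tilted fun x => -V x) := by
  simp only [integrable_tilted_iff hI, smul_eq_mul] at hg_int hg'_int hgV'_int
  have hF : ∀ x, HasDerivAt (fun x => exp (-V x) * g x)
      (exp (-V x) * g' x - exp (-V x) * (g x * V' x)) x := fun x =>
    (((hV x).neg.exp).mul (hg x)).congr_deriv (by simp only [Pi.neg_apply]; ring)
  have hIBP := integral_eq_zero_of_hasDerivAt_of_integrable hF (hg'_int.sub hgV'_int) hg_int
  rw [integral_sub hg'_int hgV'_int, sub_eq_zero] at hIBP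
  simp only [integral_tilted, smul_eq_mul, div_mul_eq_mul_div, integral_div, hIBP]

theorem tilted_variance_le_inv {K : ℝ≥0}
    (hV : ∀ x, HasDerivAt V (V' x) x) (hk : 0 < k) (hmono : Monotone fun x => V' x - k * x)
    (hlip : LipschitzWith K V') :
    IsProbabilityMeasure (volume.tilted fun x => -V x) ∧
    Integrable (fun x => x) (volume.tilted fun x => -V x) ∧
    Integrable (fun x => x ^ 2) (volume.tilted fun x => -V x) ∧
    ∫ x, (x - ∫ y, y ∂(volume.tilted fun x => -V x)) ^ 2 ∂(volume.tilted fun x => -V x)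
      ≤ k⁻¹ := by
  set μ := volume.tilted fun x => -V x
  have hI := integrable_exp_neg_of_monotone_sub_mul hV hk hmono
  have hint : ∀ {f : ℝ → ℝ} {C : ℝ}, Continuous f → (∀ x, |f x| ≤ C * (1 + x ^ 2)) →
      Integrable f μ := fun hf hfC =>
    (integrable_tilted_iff hI _).2 (integrable_exp_neg_mul_of_monotone_sub_mul hV hk hmono hf hfC)
  have hprob := isProbabilityMeasure_tilted hI
  have hx : Integrable (fun x => x) μ := hint (C := 1) continuous_id fun x => by
    simpa using abs_add_mul_add_mul_abs_le le_rfl zero_le_one le_rfl x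
  have hx2 : Integrable (fun x => x ^ 2) μ := hint (C := 1) (continuous_pow 2) fun x => by
    rw [abs_of_nonneg (sq_nonneg x)]; linarith
  refine ⟨hprob, hx, hx2, ?_⟩
  set m := ∫ y, y ∂μ
  have hxm : Integrable (fun x => x - m) μ := hx.sub (integrable_const m)
  have hsq : Integrable (fun x => (x - m) ^ 2) μ :=
    hint (C := 2 + 2 * m ^ 2) ((continuous_sub_right m).pow 2) fun x => by
      rw [abs_of_nonneg (sq_nonneg _)]
      nlinarith [sq_nonneg (x + m), mul_nonneg (sq_nonneg m) (sq_nonneg x)]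
  have hxV : Integrable (fun x => (x - m) * V' x) μ :=
    hint ((continuous_sub_right m).mul hlip.continuous) fun x => by
      refine le_trans ?_ (abs_add_mul_add_mul_abs_le (abs_nonneg m) (abs_nonneg (V' 0)) K.2 x)
      have hV'x : |V' x| ≤ |V' 0| + K * |x| := by
        have := hlip.dist_le_mul x 0
        rw [Real.dist_eq, Real.dist_eq, sub_zero] at this
        linarith [abs_sub_abs_le_abs_sub (V' x) (V' 0)]
      rw [abs_mul]
      exact mul_le_mul (abs_sub _ _) hV'x (abs_nonneg _) (by positivity)
  have hstein : ∫ x, (x - m) * V' x ∂μ = 1 := by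
    rw [← integral_deriv_tilted_eq_integral_mul_deriv hV
      (fun x => (hasDerivAt_id' x).sub_const m) hI hxm (integrable_const 1) hxV]
    simp
  have hmean : ∫ x, (x - m) ∂μ = 0 := by
    rw [integral_sub hx (integrable_const m)]
    simp [m]
  calc ∫ x, (x - m) ^ 2 ∂μ = k⁻¹ * ∫ x, k * (x - m) ^ 2 ∂μ := by
        rw [integral_const_mul, inv_mul_cancel_left₀ hk.ne']
    _ ≤ k⁻¹ * ∫ x, ((x - m) * V' x - V' m * (x - m)) ∂μ := by
        refine mul_le_mul_of_nonneg_left ?_ (inv_nonneg.2 hk.le)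
        refine integral_mono (hsq.const_mul k) (hxV.sub (hxm.const_mul _)) fun x => ?_
        linarith [hmono.mul_sq_sub_le_mul_sub m x]
    _ = k⁻¹ := by
        rw [integral_sub hxV (hxm.const_mul _), integral_const_mul, hstein, hmean]
        simp

end StronglyMonotoneDerivative

def hybridPotential (φ : ℝ → ℝ) (β μ0 δr : ℝ) (x : ℝ) : ℝ :=
  φ x + β / 2 * x ^ 2 - (β * μ0 - δr) * x

lemma hybrid_eq_tilted {φ : ℝ → ℝ} {β μ0 δr : ℝ}
    (hI : Integrable fun x => exp (-hybridPotential φ β μ0 δr x)) :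
    hybrid φ β μ0 δr = volume.tilted fun x => -hybridPotential φ β μ0 δr x := by
  have hdens : hybridDens φ β μ0 δr = fun x => exp (-hybridPotential φ β μ0 δr x) := by
    ext x
    rw [hybridDens, hybridPotential]
    ring_nf
  rw [Measure.tilted_eq_inv_smul_withDensity hI, hybrid, hdens]

section HybridPotential

variable {φ : ℝ → ℝ} {B : ℝ} (β μ0 δr : ℝ)

lemma hasDerivAt_hybridPotential (hφ : Differentiable ℝ φ) (x : ℝ) :
    HasDerivAt (hybridPotential φ β μ0 δr) (deriv φ x + β * x - (β * μ0 - δr)) x :=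
  (((hφ x).hasDerivAt.add ((hasDerivAt_pow 2 x).const_mul (β / 2))).sub
    ((hasDerivAt_id' x).const_mul (β * μ0 - δr))).congr_deriv (by push_cast; ring)

lemma hasDerivAt_deriv_hybridPotential (hφ : ContDiff ℝ 2 φ) (x : ℝ) :
    HasDerivAt (fun x => deriv φ x + β * x - (β * μ0 - δr)) (iteratedDeriv 2 φ x + β) x := by
  have hφ' : HasDerivAt (deriv φ) (iteratedDeriv 2 φ x) x := by
    rw [iteratedDeriv_succ, iteratedDeriv_one]
    exact (iteratedDeriv_one (f := φ) ▸
      hφ.differentiable_iteratedDeriv 1 (by norm_num) x).hasDerivAt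
  exact ((hφ'.add ((hasDerivAt_id' x).const_mul β)).sub_const _).congr_deriv (by ring)

lemma monotone_deriv_hybridPotential_sub_mul (hφ : ContDiff ℝ 2 φ)
    (hB : ∀ x y, iteratedDeriv 2 φ x - iteratedDeriv 2 φ y ≤ B) :
    Monotone fun x =>
      deriv φ x + β * x - (β * μ0 - δr) - (β + iteratedDeriv 2 φ μ0 - B) * x :=
  monotone_sub_mul_of_le_hasDerivAt (hasDerivAt_deriv_hybridPotential β μ0 δr hφ) fun x => by
    linarith [hB μ0 x]

lemma lipschitzWith_deriv_hybridPotential (hφ : ContDiff ℝ 2 φ)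
    (hB : ∀ x y, iteratedDeriv 2 φ x - iteratedDeriv 2 φ y ≤ B) :
    LipschitzWith (|β + iteratedDeriv 2 φ μ0| + B).toNNReal
      fun x => deriv φ x + β * x - (β * μ0 - δr) := by
  have hd := hasDerivAt_deriv_hybridPotential β μ0 δr hφ
  refine lipschitzWith_of_nnnorm_deriv_le (fun x => (hd x).differentiableAt) fun x => ?_
  have h0 : 0 ≤ |β + iteratedDeriv 2 φ μ0| + B := by
    linarith [abs_nonneg (β + iteratedDeriv 2 φ μ0), hB μ0 μ0]
  rw [(hd x).deriv, Real.le_toNNReal_iff_coe_le h0, coe_nnnorm, Real.norm_eq_abs, abs_le]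
  constructor <;> linarith [hB x μ0, hB μ0 x, le_abs_self (β + iteratedDeriv 2 φ μ0),
    neg_abs_le (β + iteratedDeriv 2 φ μ0)]

end HybridPotential

theorem hybrid_variance_coarse_bound_general
    (φ : ℝ → ℝ) (B : ℝ) (hφ : ContDiff ℝ 2 φ)
    (hB : ∀ x y, iteratedDeriv 2 φ x - iteratedDeriv 2 φ y ≤ B)
    (β μ0 δr : ℝ)
    (hpos : 0 < β + iteratedDeriv 2 φ μ0 - B) :
    IsProbabilityMeasure (hybrid φ β μ0 δr) ∧
    Integrable (fun x => x) (hybrid φ β μ0 δr) ∧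
    Integrable (fun x => x ^ 2) (hybrid φ β μ0 δr) ∧
    hybridVar φ β μ0 δr ≤ (β + iteratedDeriv 2 φ μ0 - B)⁻¹ := by
  have hV := hasDerivAt_hybridPotential β μ0 δr (hφ.differentiable (by norm_num))
  have hmono := monotone_deriv_hybridPotential_sub_mul β μ0 δr hφ hB
  rw [hybridVar, hybridMean,
    hybrid_eq_tilted (integrable_exp_neg_of_monotone_sub_mul hV hpos hmono)]
  exact tilted_variance_le_inv hV hpos hmono (lipschitzWith_deriv_hybridPotential β μ0 δr hφ hB)

/-- coarse Brascamp–Lieb variance bound for the hybrid.  If `φ` is C²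
with `sup φ'' − inf φ'' ≤ B` and `β + φ''(μ0) − B > 0`, then the hybrid is a
well-defined probability measure with finite variance, and
`v_h ≤ (β + φ''(μ0) − B)⁻¹`. -/
theorem hybrid_variance_coarse_bound
    (φ : ℝ → ℝ) (B : ℝ) (hφ : ContDiff ℝ 2 φ)
    (hB : ∀ x y, iteratedDeriv 2 φ x - iteratedDeriv 2 φ y ≤ B)
    (β μ0 δr : ℝ) (hβ : 0 < β)
    (hpos : 0 < β + iteratedDeriv 2 φ μ0 - B) :
    IsProbabilityMeasure (hybrid φ β μ0 δr) ∧
    Integrable (fun x => x) (hybrid φ β μ0 δr) ∧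
    Integrable (fun x => x ^ 2) (hybrid φ β μ0 δr) ∧
    hybridVar φ β μ0 δr ≤ (β + iteratedDeriv 2 φ μ0 - B)⁻¹ :=
  hybrid_variance_coarse_bound_general φ B hφ hB β μ0 δr hpos
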